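/- Let U be a finite nonempty set of users partitioned into two nonempty groups U₀ and U₁, let s assign label 0 to users in U₀ and 1 to users in U₁, and let s̃ : U → (0,1) be predicted scores. Define the negative discriminator loss M = (1/|U|) Σ_{i∈U} [s_i log(s̃_i) + (1 - s_i) log(1 - s̃_i)] and suppose there exists δ > 0 with |log s̃_i| ≤ δ for i ∈ U₀ and |log(1 - s̃_i)| ≤ δ for i ∈ U₁. Then with r = max(|U₀|/|U|, |U₁|/|U|) and t = δ/(1 - exp(-δ)), we have M ≥ r·t·( (1/|U₀|) Σ_{i∈U₀} s̃_i − (1/|U₁|) Σ_{i∈U₁} s̃_i ) − r·t. -/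

import Mathlib

open Finset

lemma aux_final (n₀ n₁ t S₀ S₁ : ℝ) (hn₀ : 0 < n₀) (hn₁ : 0 < n₁) (ht : 0 < t)
    (hS₀ : S₀ ≤ n₀) (hS₁ : 0 ≤ S₁) :
    max (n₀ / (n₀ + n₁)) (n₁ / (n₀ + n₁)) * t * ((1 / n₀) * S₀ - (1 / n₁) * S₁) -
      max (n₀ / (n₀ + n₁)) (n₁ / (n₀ + n₁)) * t ≤
    (1 / (n₀ + n₁)) * (t * (S₀ - n₀) + -t * S₁) := by
  have hN : (0:ℝ) < n₀ + n₁ := by linarith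
  rcases le_total (n₁ / (n₀ + n₁)) (n₀ / (n₀ + n₁)) with hmax | hmax
  · rw [max_eq_left hmax, ← sub_nonneg]
    have hn : n₁ ≤ n₀ := (div_le_div_iff_of_pos_right hN).mp hmax
    have hdiff : 1 / (n₀ + n₁) * (t * (S₀ - n₀) + -t * S₁) -
        (n₀ / (n₀ + n₁) * t * (1 / n₀ * S₀ - 1 / n₁ * S₁) - n₀ / (n₀ + n₁) * t) =
        t * S₁ * (n₀ - n₁) / ((n₀ + n₁) * n₁) := by
      field_simp
      ring
    rw [hdiff]
    apply div_nonneg _ (by positivity)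
    apply mul_nonneg (mul_nonneg ht.le hS₁); linarith
  · rw [max_eq_right hmax, ← sub_nonneg]
    have hn : n₀ ≤ n₁ := (div_le_div_iff_of_pos_right hN).mp hmax
    have hdiff : 1 / (n₀ + n₁) * (t * (S₀ - n₀) + -t * S₁) -
        (n₁ / (n₀ + n₁) * t * (1 / n₀ * S₀ - 1 / n₁ * S₁) - n₁ / (n₀ + n₁) * t) =
        t * (n₀ - S₀) * (n₁ - n₀) / ((n₀ + n₁) * n₀) := by
      field_simp
      ring
    rw [hdiff]
    apply div_nonneg _ (by positivity)
    apply mul_nonneg (mul_nonneg ht.le (by linarith)); linarith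

theorem discriminator_lower_bound {ι : Type*} [DecidableEq ι]
    (U₀ U₁ : Finset ι) (hd : Disjoint U₀ U₁)
    (h0 : U₀.Nonempty) (h1 : U₁.Nonempty)
    (s' : ι → ℝ)
    (hs : ∀ i ∈ U₀ ∪ U₁, 0 < s' i ∧ s' i < 1)
    (δ : ℝ) (hδ : 0 < δ)
    (hb0 : ∀ i ∈ U₀, |Real.log (s' i)| ≤ δ)
    (hb1 : ∀ i ∈ U₁, |Real.log (1 - s' i)| ≤ δ) :
    (1 / ((U₀ ∪ U₁).card : ℝ)) *
        ((∑ i ∈ U₀, Real.log (s' i)) + ∑ i ∈ U₁, Real.log (1 - s' i)) ≥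
      (max ((U₀.card : ℝ) / ((U₀ ∪ U₁).card : ℝ)) ((U₁.card : ℝ) / ((U₀ ∪ U₁).card : ℝ))) *
          (δ / (1 - Real.exp (-δ))) *
          ((1 / (U₀.card : ℝ)) * (∑ i ∈ U₀, s' i) - (1 / (U₁.card : ℝ)) * ∑ i ∈ U₁, s' i) -
        (max ((U₀.card : ℝ) / ((U₀ ∪ U₁).card : ℝ)) ((U₁.card : ℝ) / ((U₀ ∪ U₁).card : ℝ))) *
          (δ / (1 - Real.exp (-δ))) := by
  set c : ℝ := Real.exp (-δ) with hc
  have hc0 : (0:ℝ) < c := Real.exp_pos _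
  have hc1 : c < 1 := by
    rw [hc]
    calc Real.exp (-δ) < Real.exp 0 := Real.exp_lt_exp.mpr (by linarith)
    _ = 1 := Real.exp_zero
  set t : ℝ := δ / (1 - c) with ht
  have ht0 : (0:ℝ) < t := div_pos hδ (by linarith)
  -- chord inequality for log on [c, 1]
  have chord : ∀ x : ℝ, 0 < x → x ≤ 1 → c ≤ x → t * (x - 1) ≤ Real.log x := by
    intro x hx0 hx1 hcx
    have hcon := strictConcaveOn_log_Ioi.concaveOn
    have ha : (0:ℝ) ≤ (1 - x) / (1 - c) := by
      apply div_nonneg <;> linarith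
    have hb : (0:ℝ) ≤ (x - c) / (1 - c) := by
      apply div_nonneg <;> linarith
    have h1c : (1:ℝ) - c ≠ 0 := by linarith
    have hab : (1 - x) / (1 - c) + (x - c) / (1 - c) = 1 := by
      field_simp
      ring
    have key := hcon.2 (Set.mem_Ioi.mpr hc0) (Set.mem_Ioi.mpr one_pos) ha hb hab
    have hmix : ((1 - x) / (1 - c)) • c + ((x - c) / (1 - c)) • (1:ℝ) = x := by
      simp only [smul_eq_mul]
      field_simp [h1c]
      ring
    rw [hmix] at key
    have hlogc : Real.log c = -δ := by rw [hc, Real.log_exp]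
    rw [hlogc, Real.log_one, smul_eq_mul, smul_eq_mul] at key
    have heq : t * (x - 1) = (1 - x) / (1 - c) * (-δ) := by
      rw [ht]; field_simp [h1c]; ring
    linarith [key, heq.le]
  -- pointwise bounds
  have hpt0 : ∀ i ∈ U₀, t * (s' i - 1) ≤ Real.log (s' i) := by
    intro i hi
    obtain ⟨h0', h1'⟩ := hs i (Finset.mem_union_left _ hi)
    have hlb := (abs_le.mp (hb0 i hi)).1
    have hcx : c ≤ s' i := by
      have := Real.exp_le_exp.mpr hlb
      rwa [Real.exp_log h0'] at this
    exact chord _ h0' h1'.le hcx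
  have hpt1 : ∀ i ∈ U₁, -t * (s' i) ≤ Real.log (1 - s' i) := by
    intro i hi
    obtain ⟨h0', h1'⟩ := hs i (Finset.mem_union_right _ hi)
    have hlb := (abs_le.mp (hb1 i hi)).1
    have hcx : c ≤ 1 - s' i := by
      have := Real.exp_le_exp.mpr hlb
      rwa [Real.exp_log (by linarith)] at this
    have := chord (1 - s' i) (by linarith) (by linarith) hcx
    linarith
  -- sum bounds
  have hsum0 : t * ((∑ i ∈ U₀, s' i) - (U₀.card : ℝ)) ≤ ∑ i ∈ U₀, Real.log (s' i) := by
    have h := Finset.sum_le_sum hpt0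
    have heq : ∑ i ∈ U₀, t * (s' i - 1) = t * ((∑ i ∈ U₀, s' i) - (U₀.card : ℝ)) := by
      simp [mul_sub, Finset.sum_sub_distrib, Finset.mul_sum]
      ring
    linarith [heq ▸ h]
  have hsum1 : -t * (∑ i ∈ U₁, s' i) ≤ ∑ i ∈ U₁, Real.log (1 - s' i) := by
    have h := Finset.sum_le_sum hpt1
    rwa [← Finset.mul_sum] at h
  -- cardinalities
  have hcard : ((U₀ ∪ U₁).card : ℝ) = (U₀.card : ℝ) + (U₁.card : ℝ) := by
    rw [Finset.card_union_of_disjoint hd]; push_cast; ring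
  have hn₀0 : (0:ℝ) < (U₀.card : ℝ) := by exact_mod_cast Finset.card_pos.mpr h0
  have hn₁0 : (0:ℝ) < (U₁.card : ℝ) := by exact_mod_cast Finset.card_pos.mpr h1
  have hS₀le : (∑ i ∈ U₀, s' i) ≤ (U₀.card : ℝ) := by
    calc ∑ i ∈ U₀, s' i ≤ ∑ i ∈ U₀, (1:ℝ) :=
          Finset.sum_le_sum (fun i hi => (hs i (Finset.mem_union_left _ hi)).2.le)
    _ = (U₀.card : ℝ) := by simp
  have hS₁0 : 0 ≤ ∑ i ∈ U₁, s' i :=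
    Finset.sum_nonneg (fun i hi => (hs i (Finset.mem_union_right _ hi)).1.le)
  have step1 : (1 / ((U₀.card : ℝ) + (U₁.card : ℝ))) *
      (t * ((∑ i ∈ U₀, s' i) - (U₀.card : ℝ)) + -t * ∑ i ∈ U₁, s' i) ≤
      (1 / ((U₀.card : ℝ) + (U₁.card : ℝ))) *
      ((∑ i ∈ U₀, Real.log (s' i)) + ∑ i ∈ U₁, Real.log (1 - s' i)) := by
    apply mul_le_mul_of_nonneg_left _ (by positivity)
    linarith
  rw [ge_iff_le, hcard]
  exact le_trans (aux_final _ _ _ _ _ hn₀0 hn₁0 ht0 hS₀le hS₁0) step1
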